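/- Let ω, ω̃, h, h̃, n > 0, let K : ℝ⁶ → ℝ be K(u,v,w,ũ,ṽ,w̃) = (1/(32n))(4ωω̃(vṽ − ww̃) − ω²u² − ω̃²ũ²), and let X : ℝ⁶ → ℝ⁶ be the reduced Hamiltonian vector field X(x) = (2 a × ∇_a K(x), 2 b × ∇_b K(x)) with a = (u,v,w), b = (ũ,ṽ,w̃). Let x₀ = (h, 0, 0, −h̃, 0, 0) or x₀ = (−h, 0, 0, h̃, 0, 0). Then x₀ is a Lyapunov stable equilibrium of the flow of X on the product of spheres S = {x ∈ ℝ⁶ : u² + v² + w² = h², ũ² + ṽ² + w̃² = h̃²}: for every ε > 0 there exists δ > 0 such that every differentiable curve f : [0,∞) → ℝ⁶ with f′(t) = X(f(t)) for all t ≥ 0, f(0) ∈ S and ‖f(0) − x₀‖ < δ satisfies ‖f(t) − x₀‖ < ε for all t ≥ 0. In other words, a superposition of two travelling waves with wave numbers j and n/2 − j moving in opposite directions is stable. -/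

import Mathlib

/-!
Along the reduced flow, `u - ũ` is conserved (both `u̇` and `ũ̇` equal
`-(ωω̃/(4n))(v w̃ + w ṽ)`), and so are the radii `|a|` and `|b|`, because each half
of `X` is a cross product with the position. On `S` we have `u ≤ h` and `-ũ ≤ h̃`, so the
level set of `u - ũ` through `x₀ = ±(h,0,0,-h̃,0,0)` meets `S` only at `x₀`. The points
of the compact set `S` at distance `≥ ε` from `x₀` therefore have values of `u - ũ` in a
compact set avoiding the value at `x₀`, and continuity at `x₀` provides `δ`.
-/

noncomputable section

/-- `ℝ⁶` as a pair of vectors `a = (u,v,w)` and `b = (ũ,ṽ,w̃)` in `ℝ³`. -/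
abbrev R6 : Type := (Fin 3 → ℝ) × (Fin 3 → ℝ)

/-- The quartic integral `K = (1/(32n))(4ωω̃(vṽ − ww̃) − ω²u² − ω̃²ũ²)`. -/
noncomputable def Kred (ω ωt nn : ℝ) (x : R6) : ℝ :=
  (1/(32*nn)) * (4*ω*ωt*(x.1 1 * x.2 1 - x.1 2 * x.2 2)
    - ω^2 * (x.1 0)^2 - ωt^2 * (x.2 0)^2)

/-- The gradient of `K` with respect to the first factor `(u, v, w)`. -/
noncomputable def gradA (K : R6 → ℝ) (x : R6) : Fin 3 → ℝ :=
  fun i => fderiv ℝ K x (Pi.single i 1, 0)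

/-- The gradient of `K` with respect to the second factor `(ũ, ṽ, w̃)`. -/
noncomputable def gradB (K : R6 → ℝ) (x : R6) : Fin 3 → ℝ :=
  fun i => fderiv ℝ K x (0, Pi.single i 1)

/-- The reduced Hamiltonian vector field `X(x) = (2 a × ∇ₐK(x), 2 b × ∇_bK(x))`. -/
noncomputable def Xred (ω ωt nn : ℝ) (x : R6) : R6 :=
  ((2:ℝ) • crossProduct x.1 (gradA (Kred ω ωt nn) x),
   (2:ℝ) • crossProduct x.2 (gradB (Kred ω ωt nn) x))

/-- The product of spheres `S²_h × S²_h̃ ⊂ ℝ⁶`. -/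
def prodSpheres (h ht : ℝ) : Set R6 :=
  {x : R6 | (x.1 0)^2 + (x.1 1)^2 + (x.1 2)^2 = h^2 ∧
            (x.2 0)^2 + (x.2 1)^2 + (x.2 2)^2 = ht^2}

open Set Topology

theorem IsCompact.exists_dist_lt_of_fiber_subset {X Y : Type*} [PseudoMetricSpace X]
    [TopologicalSpace Y] [T2Space Y] {S : Set X} (hS : IsCompact S) {F : X → Y}
    (hF : ContinuousOn F S) {x₀ : X} (hFx₀ : ContinuousAt F x₀)
    (hfiber : ∀ x ∈ S, F x = F x₀ → x = x₀) {ε : ℝ} (hε : 0 < ε) :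
    ∃ δ > 0, ∀ x, dist x x₀ < δ → ∀ y ∈ S, F y = F x → dist y x₀ < ε := by
  set C := S ∩ {y | ε ≤ dist y x₀}
  have hC : IsCompact C :=
    hS.inter_right (isClosed_le continuous_const (continuous_id.dist continuous_const))
  have hFC : F x₀ ∉ F '' C := by
    rintro ⟨y, ⟨hyS, hyε⟩, hy⟩
    obtain rfl := hfiber y hyS hy
    exact hε.not_ge (by simpa using hyε)
  have hnhds : F ⁻¹' (F '' C)ᶜ ∈ 𝓝 x₀ :=
    hFx₀ ((hC.image_of_continuousOn (hF.mono inter_subset_left)).isClosed.isOpen_compl.mem_nhds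
      hFC)
  obtain ⟨δ, hδ, hball⟩ := Metric.mem_nhds_iff.1 hnhds
  exact ⟨δ, hδ, fun x hx y hy hFy => not_le.1 fun hyε => hball hx ⟨y, ⟨hy, hyε⟩, hFy⟩⟩

theorem eq_of_hasDerivWithinAt_Ici_zero {E : Type*} [NormedAddCommGroup E] [NormedSpace ℝ E]
    {g : ℝ → E} {t₀ : ℝ} (hg : ∀ t ∈ Ici t₀, HasDerivWithinAt g 0 (Ici t₀) t) {t : ℝ}
    (ht : t ∈ Ici t₀) : g t = g t₀ :=
  constant_of_has_deriv_right_zero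
    (fun s hs => (hg s hs.1).continuousWithinAt.mono Icc_subset_Ici_self)
    (fun s hs => (hg s hs.1).mono (Ici_subset_Ici.2 hs.1)) t ⟨ht, le_rfl⟩

theorem dotProduct_self_eq_of_hasDerivWithinAt {n : Type*} [Fintype n] {a a' : ℝ → n → ℝ}
    {t₀ : ℝ} (ha : ∀ t ∈ Ici t₀, HasDerivWithinAt a (a' t) (Ici t₀) t)
    (horth : ∀ t ∈ Ici t₀, a t ⬝ᵥ a' t = 0) {t : ℝ} (ht : t ∈ Ici t₀) :
    a t ⬝ᵥ a t = a t₀ ⬝ᵥ a t₀ := by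
  refine eq_of_hasDerivWithinAt_Ici_zero (g := fun s => a s ⬝ᵥ a s) (fun s hs => ?_) ht
  have hsum := HasDerivWithinAt.sum (u := Finset.univ) fun i _ =>
    (hasDerivWithinAt_pi.1 (ha s hs) i).mul (hasDerivWithinAt_pi.1 (ha s hs) i)
  convert hsum using 1
  · ext; simp [dotProduct]
  · have h := horth s hs
    simp only [dotProduct] at h
    simp only [mul_comm (a' s _), ← two_mul, ← Finset.mul_sum, h, mul_zero]

theorem isCompact_setOf_dotProduct_self_eq {n : Type*} [Fintype n] (r : ℝ) :
    IsCompact {a : n → ℝ | a ⬝ᵥ a = r} := by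
  refine Metric.isCompact_of_isClosed_isBounded
    (isClosed_eq (continuous_id.dotProduct continuous_id) continuous_const)
    ((Metric.isBounded_closedBall (x := 0) (r := √r)).subset fun a ha => ?_)
  refine mem_closedBall_zero_iff.2 ((pi_norm_le_iff_of_nonneg (Real.sqrt_nonneg r)).2 fun i => ?_)
  rw [Real.norm_eq_abs]
  refine Real.abs_le_sqrt ?_
  rw [← ha, sq, dotProduct]
  exact Finset.single_le_sum (f := fun j => a j * a j) (fun j _ => mul_self_nonneg _)
    (Finset.mem_univ i)

theorem mem_prodSpheres_iff {h ht : ℝ} {x : R6} :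
    x ∈ prodSpheres h ht ↔ x.1 ⬝ᵥ x.1 = h ^ 2 ∧ x.2 ⬝ᵥ x.2 = ht ^ 2 := by
  show _ ∧ _ ↔ _
  simp only [dotProduct, Fin.sum_univ_three, sq]

theorem isCompact_prodSpheres (h ht : ℝ) : IsCompact (prodSpheres h ht) := by
  have hprod : prodSpheres h ht = {a | a ⬝ᵥ a = h ^ 2} ×ˢ {b | b ⬝ᵥ b = ht ^ 2} := by
    ext x; exact mem_prodSpheres_iff
  rw [hprod]
  exact (isCompact_setOf_dotProduct_self_eq _).prod (isCompact_setOf_dotProduct_self_eq _)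

theorem neg_mem_prodSpheres {h ht : ℝ} {x : R6} (hx : x ∈ prodSpheres h ht) :
    -x ∈ prodSpheres h ht := by
  rw [mem_prodSpheres_iff] at hx ⊢
  simpa only [Prod.fst_neg, Prod.snd_neg, neg_dotProduct, dotProduct_neg, neg_neg] using hx

theorem eq_of_mem_prodSpheres_of_fst_sub_snd_eq {h ht : ℝ} (hh : 0 ≤ h) (hht : 0 ≤ ht)
    {x : R6} (hx : x ∈ prodSpheres h ht) (hsub : x.1 0 - x.2 0 = h + ht) :
    x = (![h, 0, 0], ![-ht, 0, 0]) := by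
  obtain ⟨hx₁, hx₂⟩ := hx
  have hu : x.1 0 = h := by nlinarith [sq_nonneg (x.1 1), sq_nonneg (x.1 2)]
  have hu₂ : x.2 0 = -ht := by nlinarith [sq_nonneg (x.2 1), sq_nonneg (x.2 2)]
  rw [hu] at hx₁
  rw [hu₂, neg_sq] at hx₂
  have hv : x.1 1 = 0 := by nlinarith [sq_nonneg (x.1 1), sq_nonneg (x.1 2)]
  have hw : x.1 2 = 0 := by nlinarith [sq_nonneg (x.1 1), sq_nonneg (x.1 2)]
  have hv₂ : x.2 1 = 0 := by nlinarith [sq_nonneg (x.2 1), sq_nonneg (x.2 2)]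
  have hw₂ : x.2 2 = 0 := by nlinarith [sq_nonneg (x.2 1), sq_nonneg (x.2 2)]
  ext i <;> fin_cases i <;> simp [hu, hv, hw, hu₂, hv₂, hw₂]

theorem eq_of_mem_prodSpheres_of_fst_sub_snd_eq_neg {h ht : ℝ} (hh : 0 ≤ h) (hht : 0 ≤ ht)
    {x : R6} (hx : x ∈ prodSpheres h ht) (hsub : x.1 0 - x.2 0 = -(h + ht)) :
    x = (![-h, 0, 0], ![ht, 0, 0]) := by
  have hneg := eq_of_mem_prodSpheres_of_fst_sub_snd_eq hh hht (neg_mem_prodSpheres hx) (by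
    simp only [Prod.fst_neg, Prod.snd_neg, Pi.neg_apply]
    linarith)
  rw [← neg_neg x, hneg]
  simp

section Flow

variable (ω ωt nn : ℝ)

theorem fderiv_Kred_apply (x v : R6) :
    fderiv ℝ (Kred ω ωt nn) x v = (1 / (32 * nn)) *
      (4 * ω * ωt * (v.1 1 * x.2 1 + x.1 1 * v.2 1 - v.1 2 * x.2 2 - x.1 2 * v.2 2)
        - 2 * ω ^ 2 * x.1 0 * v.1 0 - 2 * ωt ^ 2 * x.2 0 * v.2 0) := by
  have hA (i : Fin 3) := (hasFDerivAt_apply i x.1).comp x (hasFDerivAt_fst (𝕜 := ℝ) (p := x))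
  have hB (i : Fin 3) := (hasFDerivAt_apply i x.2).comp x (hasFDerivAt_snd (𝕜 := ℝ) (p := x))
  have hK := ((((hA 1).mul (hB 1)).sub ((hA 2).mul (hB 2))).const_mul (4 * ω * ωt)
    |>.sub (((hA 0).pow 2).const_mul (ω ^ 2)) |>.sub (((hB 0).pow 2).const_mul (ωt ^ 2))
    |>.const_mul (1 / (32 * nn)))
  rw [(show HasFDerivAt (Kred ω ωt nn) _ x from hK).fderiv]
  simp only [Function.comp_apply, _root_.smul_apply, _root_.sub_apply, _root_.add_apply,
    ContinuousLinearMap.comp_apply, ContinuousLinearMap.coe_fst',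
    ContinuousLinearMap.coe_snd', ContinuousLinearMap.proj_apply, smul_eq_mul, nsmul_eq_mul]
  ring

theorem Xred_fst_zero_eq_snd_zero (x : R6) : (Xred ω ωt nn x).1 0 = (Xred ω ωt nn x).2 0 := by
  simp only [Xred, cross_apply, gradA, gradB, fderiv_Kred_apply, Pi.zero_apply,
    Pi.single_eq_same, ne_eq, Fin.reduceEq, not_false_eq_true, Pi.single_eq_of_ne,
    Matrix.smul_cons, Matrix.smul_empty, Matrix.cons_val_zero, smul_eq_mul]
  ring

theorem dotProduct_Xred_fst (x : R6) : x.1 ⬝ᵥ (Xred ω ωt nn x).1 = 0 := by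
  simp [Xred, dotProduct_smul, dot_self_cross]

theorem dotProduct_Xred_snd (x : R6) : x.2 ⬝ᵥ (Xred ω ωt nn x).2 = 0 := by
  simp [Xred, dotProduct_smul, dot_self_cross]

end Flow

section Solution

variable {ω ωt nn : ℝ} {f : ℝ → R6}

theorem hasDerivWithinAt_fst_of_solution
    (hf : ∀ t ∈ Ici (0 : ℝ), HasDerivWithinAt f (Xred ω ωt nn (f t)) (Ici 0) t)
    {t : ℝ} (ht : t ∈ Ici (0 : ℝ)) :
    HasDerivWithinAt (fun s => (f s).1) (Xred ω ωt nn (f t)).1 (Ici 0) t :=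
  (hasFDerivAt_fst (𝕜 := ℝ) (p := f t)).comp_hasDerivWithinAt t (hf t ht)

theorem hasDerivWithinAt_snd_of_solution
    (hf : ∀ t ∈ Ici (0 : ℝ), HasDerivWithinAt f (Xred ω ωt nn (f t)) (Ici 0) t)
    {t : ℝ} (ht : t ∈ Ici (0 : ℝ)) :
    HasDerivWithinAt (fun s => (f s).2) (Xred ω ωt nn (f t)).2 (Ici 0) t :=
  (hasFDerivAt_snd (𝕜 := ℝ) (p := f t)).comp_hasDerivWithinAt t (hf t ht)

theorem fst_zero_sub_snd_zero_of_solution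
    (hf : ∀ t ∈ Ici (0 : ℝ), HasDerivWithinAt f (Xred ω ωt nn (f t)) (Ici 0) t)
    {t : ℝ} (ht : t ∈ Ici (0 : ℝ)) :
    (f t).1 0 - (f t).2 0 = (f 0).1 0 - (f 0).2 0 := by
  refine eq_of_hasDerivWithinAt_Ici_zero (g := fun s => (f s).1 0 - (f s).2 0) (fun s hs => ?_) ht
  have h := (hasDerivWithinAt_pi.1 (hasDerivWithinAt_fst_of_solution hf hs) 0).sub
    (hasDerivWithinAt_pi.1 (hasDerivWithinAt_snd_of_solution hf hs) 0)
  rwa [Xred_fst_zero_eq_snd_zero, sub_self] at h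

theorem mem_prodSpheres_of_solution
    (hf : ∀ t ∈ Ici (0 : ℝ), HasDerivWithinAt f (Xred ω ωt nn (f t)) (Ici 0) t)
    {h ht : ℝ} (h₀ : f 0 ∈ prodSpheres h ht) {t : ℝ}
    (htpos : t ∈ Ici (0 : ℝ)) : f t ∈ prodSpheres h ht := by
  rw [mem_prodSpheres_iff] at h₀ ⊢
  rw [dotProduct_self_eq_of_hasDerivWithinAt (fun s hs => hasDerivWithinAt_fst_of_solution hf hs)
      (fun s _ => dotProduct_Xred_fst ω ωt nn (f s)) htpos,
    dotProduct_self_eq_of_hasDerivWithinAt (fun s hs => hasDerivWithinAt_snd_of_solution hf hs)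
      (fun s _ => dotProduct_Xred_snd ω ωt nn (f s)) htpos]
  exact h₀

end Solution

theorem opposite_travelling_waves_stable_general
    (ω ωt h ht nn : ℝ)
    (hh : 0 < h) (hht : 0 < ht)
    (x₀ : R6)
    (hx₀ : x₀ = (![h, 0, 0], ![-ht, 0, 0]) ∨ x₀ = (![-h, 0, 0], ![ht, 0, 0])) :
    ∀ ε > 0, ∃ δ > 0, ∀ f : ℝ → R6,
      (∀ t ∈ Set.Ici (0:ℝ), HasDerivWithinAt f (Xred ω ωt nn (f t)) (Set.Ici 0) t) →
      f 0 ∈ prodSpheres h ht → ‖f 0 - x₀‖ < δ →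
      ∀ t ∈ Set.Ici (0:ℝ), ‖f t - x₀‖ < ε := by
  intro ε hε
  have hfiber : ∀ x ∈ prodSpheres h ht, x.1 0 - x.2 0 = x₀.1 0 - x₀.2 0 → x = x₀ := by
    intro x hx hsub
    rcases hx₀ with rfl | rfl <;> simp only [Matrix.cons_val_zero] at hsub
    · exact eq_of_mem_prodSpheres_of_fst_sub_snd_eq hh.le hht.le hx (by linarith)
    · exact eq_of_mem_prodSpheres_of_fst_sub_snd_eq_neg hh.le hht.le hx (by linarith)
  obtain ⟨δ, hδ, hstable⟩ := (isCompact_prodSpheres h ht).exists_dist_lt_of_fiber_subset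
    (F := fun x : R6 => x.1 0 - x.2 0) (by fun_prop) (by fun_prop) hfiber hε
  refine ⟨δ, hδ, fun f hf h₀ hnear t htpos => ?_⟩
  simpa only [dist_eq_norm] using hstable (f 0) (by rwa [dist_eq_norm])
    (f t) (mem_prodSpheres_of_solution hf h₀ htpos) (fst_zero_sub_snd_zero_of_solution hf htpos)

/-- **Corollary 3 of the paper (first part).** A superposition of two travelling
waves with wave numbers `j` and `n/2 − j` moving in opposite directions, i.e.
the relative equilibrium `(h,0,0,−h̃,0,0)` or `(−h,0,0,h̃,0,0)`, is a Lyapunov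
stable equilibrium of the reduced flow on the product of spheres. -/
theorem opposite_travelling_waves_stable
    (ω ωt h ht nn : ℝ) (hω : 0 < ω) (hωt : 0 < ωt)
    (hh : 0 < h) (hht : 0 < ht) (hn : 0 < nn)
    (x₀ : R6)
    (hx₀ : x₀ = (![h, 0, 0], ![-ht, 0, 0]) ∨ x₀ = (![-h, 0, 0], ![ht, 0, 0])) :
    ∀ ε > 0, ∃ δ > 0, ∀ f : ℝ → R6,
      (∀ t ∈ Set.Ici (0:ℝ), HasDerivWithinAt f (Xred ω ωt nn (f t)) (Set.Ici 0) t) →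
      f 0 ∈ prodSpheres h ht → ‖f 0 - x₀‖ < δ →
      ∀ t ∈ Set.Ici (0:ℝ), ‖f t - x₀‖ < ε :=
  opposite_travelling_waves_stable_general ω ωt h ht nn hh hht x₀ hx₀
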